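/- Let L be a weak tensor product of a finite family L₁,…,L_n of simple closure spaces, and let x₁,…,x_n be coatoms of L₁,…,L_n respectively. Then X = ⋃_{i=1}^n π_i^{-1}(x_i) is a coatom of L. -/

import Mathlib

open Set

/-- A simple closure space on `σ`: a family of subsets closed under arbitrary
intersections (the empty intersection giving `univ`), containing `∅` and all singletons. -/
def IsSCS {σ : Type*} (L : Set (Set σ)) : Prop :=
  (∀ ω ⊆ L, ⋂₀ ω ∈ L) ∧ (∅ : Set σ) ∈ L ∧ ∀ p : σ, {p} ∈ L

/-- The join of a subset `A` of atoms/points in a simple closure space `L`. -/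
def sJoin {σ : Type*} (L : Set (Set σ)) (A : Set σ) : Set σ := ⋂₀ {b ∈ L | A ⊆ b}

/-- `b` covers `a` in `L`. -/
def CoversIn {σ : Type*} (L : Set (Set σ)) (a b : Set σ) : Prop :=
  a ⊂ b ∧ ∀ c ∈ L, a ⊆ c → c ⊆ b → c = a ∨ c = b

/-- `x` is a coatom of `L`. -/
def IsCoatomOf {σ : Type*} (L : Set (Set σ)) (x : Set σ) : Prop :=
  x ∈ L ∧ x ≠ univ ∧ ∀ c ∈ L, x ⊆ c → c = x ∨ c = univ

/-- `L` is coatomistic: every element is a meet of coatoms. -/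
def Coatomistic {σ : Type*} (L : Set (Set σ)) : Prop :=
  ∀ a ∈ L, a = ⋂₀ {x | IsCoatomOf L x ∧ a ⊆ x}

/-- Covering property: for any atom `p` and `a ∈ L` with `p ∧ a = 0`,
`p ∨ a` covers `a`. -/
def HasCovProp {σ : Type*} (L : Set (Set σ)) : Prop :=
  ∀ p : σ, ∀ a ∈ L, p ∉ a → CoversIn L a (sJoin L (insert p a))

/-- Covering property of the dual lattice of `L`. -/
def HasDualCovProp {σ : Type*} (L : Set (Set σ)) : Prop :=
  ∀ x, IsCoatomOf L x → ∀ a ∈ L, sJoin L (x ∪ a) = univ → CoversIn L (x ∩ a) a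

/-- `f` is an orthocomplementation of `L`: an order-reversing involution with
`a ∨ f a = 1` for all `a ∈ L`. -/
def IsOrthoOn {σ : Type*} (L : Set (Set σ)) (f : Set σ → Set σ) : Prop :=
  (∀ a ∈ L, f a ∈ L) ∧ (∀ a ∈ L, f (f a) = a) ∧
  (∀ a ∈ L, ∀ b ∈ L, a ⊆ b → f b ⊆ f a) ∧
  (∀ a ∈ L, ∀ b ∈ L, a ∪ f a ⊆ b → b = univ)

/-- The permutation `g` of the points induces an automorphism of `L`. -/
def IsAutoOn {σ : Type*} (L : Set (Set σ)) (g : Equiv.Perm σ) : Prop :=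
  ∀ a, a ∈ L ↔ g '' a ∈ L

/-- `L` contains `MO₃`: three distinct atoms `p, q, r` such that `p ∨ q`
covers each of them. -/
def ContainsMO3 {σ : Type*} (L : Set (Set σ)) : Prop :=
  ∃ p q r : σ, p ≠ q ∧ p ≠ r ∧ q ≠ r ∧
    CoversIn L {p} (sJoin L {p, q}) ∧ CoversIn L {q} (sJoin L {p, q}) ∧
    CoversIn L {r} (sJoin L {p, q})

/-- `L` contains `MO₄`: four distinct atoms `p, q, r, s` such that `p ∨ q`
covers each of them. -/
def ContainsMO4 {σ : Type*} (L : Set (Set σ)) : Prop :=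
  ∃ p q r s : σ, p ≠ q ∧ p ≠ r ∧ p ≠ s ∧ q ≠ r ∧ q ≠ s ∧ r ≠ s ∧
    CoversIn L {p} (sJoin L {p, q}) ∧ CoversIn L {q} (sJoin L {p, q}) ∧
    CoversIn L {r} (sJoin L {p, q}) ∧ CoversIn L {s} (sJoin L {p, q})

/-- A connected covering of the point set of `L`. -/
def IsConnCover {σ : Type*} (L : Set (Set σ)) (𝒜 : Set (Set σ)) : Prop :=
  ⋃₀ 𝒜 = Set.univ ∧
  (∀ A ∈ 𝒜, ∃ p q : σ, p ∈ A ∧ q ∈ A ∧ p ≠ q) ∧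
  (∀ A ∈ 𝒜, ∀ p ∈ A, ∀ q ∈ A, p ≠ q → ∃ r, r ∈ sJoin L {p, q} ∧ r ≠ p ∧ r ≠ q) ∧
  (∀ p q : σ, ∃ n : ℕ, ∃ c : Fin (n + 1) → Set σ, (∀ i, c i ∈ 𝒜) ∧
    p ∈ c 0 ∧ q ∈ c (Fin.last n) ∧
    ∀ i : Fin n, ∃ x y : σ, x ≠ y ∧ (x ∈ c i.castSucc ∧ x ∈ c i.succ) ∧
      (y ∈ c i.castSucc ∧ y ∈ c i.succ))

/-- `L` is weakly connected: `L ≠ 2` and there is a connected covering. -/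
def WeaklyConnected {σ : Type*} (L : Set (Set σ)) : Prop :=
  (∃ p q : σ, p ≠ q) ∧ ∃ 𝒜, IsConnCover L 𝒜

/-- Restriction of `L` to the subset `e`, as a family of subsets of `↥e`. -/
def restrictCS {σ : Type*} (L : Set (Set σ)) (e : Set σ) : Set (Set e) :=
  {B | ∃ a ∈ L, a ⊆ e ∧ B = Subtype.val ⁻¹' a}

/-- Center of an orthocomplemented simple closure space: elements whose
orthocomplement is the set complement. -/
def centerOf {σ : Type*} (L : Set (Set σ)) (f : Set σ → Set σ) : Set (Set σ) :=
  {a ∈ L | f a = aᶜ}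

/-- Central cover of a point `p`. -/
def centralCover {σ : Type*} (L : Set (Set σ)) (f : Set σ → Set σ) (p : σ) : Set σ :=
  ⋂₀ {a ∈ centerOf L f | p ∈ a}

section Family

variable {Ω : Type*} {X : Ω → Type*}

/-- `⋃_α π_α⁻¹ (a α)`. -/
def cylUnion (a : ∀ α, Set (X α)) : Set (∀ α, X α) := {p | ∃ α, p α ∈ a α}

/-- `p[B, β]`: the point `p` with its `β`-th coordinate varying over `B`. -/
def pSub (p : ∀ α, X α) (β : Ω) (B : Set (X β)) : Set (∀ α, X α) :=
  {q | q β ∈ B ∧ ∀ α, α ≠ β → q α = p α}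

/-- The section `R_β[p]` of `R ⊆ ∏_α X α`. -/
def sect (R : Set (∀ α, X α)) (β : Ω) (p : ∀ α, X α) : Set (X β) :=
  {q | ∃ r ∈ R, r β = q ∧ ∀ α, α ≠ β → r α = p α}

/-- The box product `⊼_α L_α`: all nonempty intersections of the sets
`⋃_α π_α⁻¹ (a α)`. -/
def boxProd (L : ∀ α, Set (Set (X α))) : Set (Set (∀ α, X α)) :=
  {A | ∃ ω ⊆ {B | ∃ a : ∀ α, Set (X α), (∀ α, a α ∈ L α) ∧ B = cylUnion a},
    ω.Nonempty ∧ A = ⋂₀ ω}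

/-- The Fraser product `⊻_α L_α`: all `R` whose sections all lie in the factors. -/
def fraserProd (L : ∀ α, Set (Set (X α))) : Set (Set (∀ α, X α)) :=
  {R | ∀ β, ∀ p : ∀ α, X α, sect R β p ∈ L β}

/-- `M` is a weak tensor product of the family `L`: axioms P1–P3. -/
def IsWTP (L : ∀ α, Set (Set (X α))) (M : Set (Set (∀ α, X α))) : Prop :=
  IsSCS M ∧ (∀ a : ∀ α, Set (X α), (∀ α, a α ∈ L α) → cylUnion a ∈ M) ∧
  (∀ p : ∀ α, X α, ∀ β, ∀ B : Set (X β), pSub p β B ∈ M → B ∈ L β)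

/-- The closure operator `⋁_β R = ⋃_p p[⋁ R_β[p]]`. -/
def vJoin (L : ∀ α, Set (Set (X α))) (β : Ω) (R : Set (∀ α, X α)) : Set (∀ α, X α) :=
  ⋃ p : ∀ α, X α, pSub p β (sJoin (L β) (sect R β p))

/-- The orthocomplementation `#` induced on the box product by
orthocomplementations of the factors. -/
def sharp (f : ∀ α, Set (X α) → Set (X α)) (a : Set (∀ α, X α)) : Set (∀ α, X α) :=
  {p | ∀ q ∈ a, ∃ α, p α ∈ f α {q α}}

end Family

section Binary

variable {X₁ X₂ : Type*}

/-- `a₁ × Σ₂ ∪ Σ₁ × a₂`. -/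
def cylUnion₂ (a₁ : Set X₁) (a₂ : Set X₂) : Set (X₁ × X₂) := {p | p.1 ∈ a₁ ∨ p.2 ∈ a₂}

/-- Binary box product. -/
def boxProd₂ (L₁ : Set (Set X₁)) (L₂ : Set (Set X₂)) : Set (Set (X₁ × X₂)) :=
  {A | ∃ ω ⊆ {B | ∃ a₁ ∈ L₁, ∃ a₂ ∈ L₂, B = cylUnion₂ a₁ a₂}, ω.Nonempty ∧ A = ⋂₀ ω}

/-- Binary Fraser product. -/
def fraserProd₂ (L₁ : Set (Set X₁)) (L₂ : Set (Set X₂)) : Set (Set (X₁ × X₂)) :=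
  {R | (∀ p₁, {q | (p₁, q) ∈ R} ∈ L₂) ∧ (∀ p₂, {q | (q, p₂) ∈ R} ∈ L₁)}

/-- Binary weak tensor product: axioms P1–P3. -/
def IsWTP₂ (L₁ : Set (Set X₁)) (L₂ : Set (Set X₂)) (M : Set (Set (X₁ × X₂))) : Prop :=
  IsSCS M ∧ (∀ a₁ ∈ L₁, ∀ a₂ ∈ L₂, cylUnion₂ a₁ a₂ ∈ M) ∧
  (∀ p₁ : X₁, ∀ A₂ : Set X₂, {p₁} ×ˢ A₂ ∈ M → A₂ ∈ L₂) ∧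
  (∀ p₂ : X₂, ∀ A₁ : Set X₁, A₁ ×ˢ {p₂} ∈ M → A₁ ∈ L₁)

/-- The simple closure space `MO_Σ`, containing only `∅`, `Σ` and the singletons. -/
def MOspace (X : Type*) : Set (Set X) := {∅, univ} ∪ {A | ∃ p, A = {p}}

end Binary

/-! A point `p` of a closed set `c ⊇ ⋃ᵢ πᵢ⁻¹(xᵢ)` lying outside `⋃ᵢ πᵢ⁻¹(xᵢ)` can be moved freely
along any coordinate `β` without leaving `c`: by P3 the section of `c` through `p` in direction `β`
lies in `L_β`, it contains the coatom `x_β` and the point `p β ∉ x_β`, so it is all of `Σ_β`.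
Moving `p` one coordinate at a time reaches every point, so `c = univ`. -/

section Family

variable {Ω : Type*} {X : Ω → Type*} {L : ∀ α, Set (Set (X α))} {M : Set (Set (∀ α, X α))}

theorem cylUnion_update_empty [DecidableEq Ω] (α : Ω) (s : Set (X α)) :
    cylUnion (Function.update (fun γ => (∅ : Set (X γ))) α s) = Function.eval α ⁻¹' s := by
  ext q
  constructor
  · rintro ⟨γ, hγ⟩
    by_cases h : γ = α
    · subst h
      simpa using hγ
    · simp [Function.update_of_ne h] at hγ
  · exact fun h => ⟨α, by simpa using h⟩

theorem mem_sect_iff_update_mem [DecidableEq Ω] {R : Set (∀ α, X α)} {β : Ω}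
    {p : ∀ α, X α} {t : X β} : t ∈ sect R β p ↔ Function.update p β t ∈ R := by
  constructor
  · rintro ⟨r, hr, rfl, hrp⟩
    convert hr
    exact (Function.update_eq_iff.2 ⟨rfl, fun α hα => (hrp α hα).symm⟩)
  · exact fun h => ⟨_, h, by simp, fun α hα => Function.update_of_ne hα _ _⟩

theorem pSub_sect (R : Set (∀ α, X α)) (β : Ω) (p : ∀ α, X α) :
    pSub p β (sect R β p) = R ∩ {q | ∀ α, α ≠ β → q α = p α} := by
  classical
  ext q
  have hq : (∀ α, α ≠ β → q α = p α) → Function.update p β (q β) = q := fun h =>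
    Function.update_eq_iff.2 ⟨rfl, fun α hα => (h α hα).symm⟩
  constructor
  · rintro ⟨hqR, hqp⟩
    exact ⟨hq hqp ▸ mem_sect_iff_update_mem.1 hqR, hqp⟩
  · rintro ⟨hqR, hqp⟩
    exact ⟨mem_sect_iff_update_mem.2 ((hq hqp).symm ▸ hqR), hqp⟩

namespace IsWTP

variable (hL : ∀ α, IsSCS (L α)) (hM : IsWTP L M)
include hL hM

theorem preimage_eval_mem {α : Ω} {s : Set (X α)} (hs : s ∈ L α) :
    Function.eval α ⁻¹' s ∈ M := by
  classical
  rw [← cylUnion_update_empty]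
  refine hM.2.1 _ fun γ => ?_
  by_cases h : γ = α
  · subst h
    simpa using hs
  · simpa [Function.update_of_ne h] using (hL γ).2.1

theorem fiber_mem (β : Ω) (p : ∀ α, X α) : {q : ∀ α, X α | ∀ α, α ≠ β → q α = p α} ∈ M := by
  have h : {q : ∀ α, X α | ∀ α, α ≠ β → q α = p α} =
      ⋂₀ ((fun α => Function.eval α ⁻¹' {p α}) '' {α | α ≠ β}) := by
    ext q
    simp
  rw [h]
  refine hM.1.1 _ ?_
  rintro _ ⟨α, -, rfl⟩
  exact preimage_eval_mem hL hM ((hL α).2.2 (p α))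

theorem subset_fraserProd : M ⊆ fraserProd L := by
  intro R hR β p
  refine hM.2.2 p β _ ?_
  rw [pSub_sect, ← sInter_pair]
  refine hM.1.1 _ ?_
  rintro _ (rfl | rfl)
  exacts [hR, fiber_mem hL hM β p]

theorem update_mem_of_cylUnion_subset [DecidableEq Ω] {x : ∀ α, Set (X α)}
    (hx : ∀ α, IsCoatomOf (L α) (x α)) {c : Set (∀ α, X α)} (hc : c ∈ M)
    (hxc : cylUnion x ⊆ c) {p : ∀ α, X α} (hp : p ∈ c) {β : Ω} (hpβ : p β ∉ x β) (t : X β) :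
    Function.update p β t ∈ c := by
  have hsect : x β ⊆ sect c β p := fun s hs =>
    mem_sect_iff_update_mem.2 (hxc ⟨β, by simpa using hs⟩)
  rcases (hx β).2.2 _ (subset_fraserProd hL hM hc β p) hsect with h | h
  · exact absurd (h ▸ mem_sect_iff_update_mem.2 (by simpa using hp)) hpβ
  · exact mem_sect_iff_update_mem.1 (h ▸ mem_univ t)

theorem eq_univ_of_cylUnion_ssubset [Fintype Ω] {x : ∀ α, Set (X α)}
    (hx : ∀ α, IsCoatomOf (L α) (x α)) {c : Set (∀ α, X α)} (hc : c ∈ M)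
    (hxc : cylUnion x ⊂ c) : c = univ := by
  classical
  obtain ⟨p, hpc, hpx⟩ := exists_of_ssubset hxc
  have hpx' : ∀ α, p α ∉ x α := fun α h => hpx ⟨α, h⟩
  refine eq_univ_of_forall fun q => ?_
  have hpiecewise : ∀ s : Finset Ω, s.piecewise q p ∈ c := by
    intro s
    induction s using Finset.induction_on with
    | empty => simpa using hpc
    | insert a s ha ih =>
      rw [Finset.piecewise_insert]
      refine update_mem_of_cylUnion_subset hL hM hx hc hxc.1 ih ?_ _
      rw [Finset.piecewise_eq_of_notMem _ _ _ ha]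
      exact hpx' a
  simpa using hpiecewise Finset.univ

end IsWTP

theorem cylUnion_ne_univ {x : ∀ α, Set (X α)} (hx : ∀ α, x α ≠ univ) : cylUnion x ≠ univ := by
  choose p hp using fun α => (ne_univ_iff_exists_notMem (x α)).1 (hx α)
  intro h
  obtain ⟨α, hα⟩ : p ∈ cylUnion x := h ▸ mem_univ p
  exact hp α hα

end Family

theorem stmt_11_general {n : ℕ} {X : Fin n → Type*}
    (L : ∀ i, Set (Set (X i))) (hL : ∀ i, IsSCS (L i))
    (M : Set (Set (∀ i, X i))) (hM : IsWTP L M)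
    (x : ∀ i, Set (X i)) (hx : ∀ i, IsCoatomOf (L i) (x i)) :
    IsCoatomOf M (cylUnion x) := by
  refine ⟨hM.2.1 x fun i => (hx i).1, cylUnion_ne_univ fun i => (hx i).2.1, fun c hc hxc => ?_⟩
  by_cases hcx : c ⊆ cylUnion x
  · exact Or.inl (hcx.antisymm hxc)
  · exact Or.inr (hM.eq_univ_of_cylUnion_ssubset hL hx hc (ssubset_of_subset_not_subset hxc hcx))

/-- in a weak tensor product of a finite family, if each `x_i` is a coatom
of `L_i`, then `⋃_i π_i⁻¹ (x_i)` is a coatom of `L`. -/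
theorem stmt_11 {n : ℕ} {X : Fin n → Type*} [∀ i, Nonempty (X i)]
    (L : ∀ i, Set (Set (X i))) (hL : ∀ i, IsSCS (L i))
    (M : Set (Set (∀ i, X i))) (hM : IsWTP L M)
    (x : ∀ i, Set (X i)) (hx : ∀ i, IsCoatomOf (L i) (x i)) :
    IsCoatomOf M (cylUnion x) :=
  stmt_11_general L hL M hM x hx
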